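/- arXiv:1705.06445 — 2 statements merged into one kernel-verified Lean document; each statement's English description precedes it below -/
import Mathlib

section
/- Let a>0, b>0, T>0 and let y:(0,T)→ℝ be continuously differentiable such that y'(t) ≤ -a·y(t)² + b holds for all t∈(0,T) at which y(t)>0. Then y(t) ≤ √(b/a)·coth(√(ab)·t) for all t∈(0,T). -/
/-!
For `s > 0` the function `u(s) = √(b/a) coth(√(ab) s)` solves `u' = -a u² + b` and blows up as
`s → 0⁺`. For `0 < ε < t`, the shifted function `u(· - ε) + δ` with `δ > 0` starts above `y`
near `ε` and is a strict supersolution wherever it is positive, so `y` cannot cross it on `(ε, t]`.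
Letting `δ → 0` and then `ε → 0` gives the bound.
-/

noncomputable def Real.coth (x : ℝ) : ℝ := Real.cosh x / Real.sinh x

open Real Set Filter Topology

namespace Real

lemma coth_pos {x : ℝ} (hx : 0 < x) : 0 < coth x :=
  div_pos (cosh_pos x) (sinh_pos_iff.2 hx)

lemma hasDerivAt_coth {x : ℝ} (hx : x ≠ 0) : HasDerivAt coth (1 - coth x ^ 2) x := by
  have hsinh : sinh x ≠ 0 := sinh_eq_zero.not.2 hx
  have hderiv : 1 - coth x ^ 2 = (sinh x * sinh x - cosh x * cosh x) / sinh x ^ 2 := by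
    rw [coth]
    field_simp
  exact hderiv ▸ (hasDerivAt_cosh x).div (hasDerivAt_sinh x) hsinh

lemma tendsto_coth_nhdsGT_zero : Tendsto coth (𝓝[>] 0) atTop := by
  have hsinh : Tendsto sinh (𝓝[>] 0) (𝓝[>] 0) :=
    tendsto_nhdsWithin_of_tendsto_nhds_of_eventually_within _
      (by simpa using (continuous_sinh.tendsto 0).mono_left nhdsWithin_le_nhds)
      (eventually_nhdsWithin_of_forall fun _ hx => sinh_pos_iff.2 hx)
  have hcosh : Tendsto cosh (𝓝[>] 0) (𝓝 1) := by
    simpa using (continuous_cosh.tendsto 0).mono_left nhdsWithin_le_nhds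
  exact (hcosh.pos_mul_atTop one_pos (tendsto_inv_nhdsGT_zero.comp hsinh)).congr fun x =>
    (div_eq_mul_inv _ _).symm

end Real

noncomputable def riccatiSol (a b s : ℝ) : ℝ := √(b / a) * coth (√(a * b) * s)

section Riccati

variable {a b : ℝ}

lemma hasDerivAt_riccatiSol (ha : 0 < a) (hb : 0 < b) {s : ℝ} (hs : s ≠ 0) :
    HasDerivAt (riccatiSol a b) (b - a * riccatiSol a b s ^ 2) s := by
  have hck : √(b / a) * √(a * b) = b := by
    rw [← sqrt_mul (div_pos hb ha).le, show b / a * (a * b) = b ^ 2 by field_simp, sqrt_sq hb.le]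
  have hac : a * √(b / a) ^ 2 = b := by
    rw [sq_sqrt (div_pos hb ha).le]
    field_simp
  have hcoth := (hasDerivAt_coth (mul_ne_zero (sqrt_pos.2 (mul_pos ha hb)).ne' hs)).comp s
    ((hasDerivAt_id s).const_mul √(a * b))
  refine (hcoth.const_mul √(b / a)).congr_deriv ?_
  simp only [riccatiSol, mul_one]
  linear_combination (1 - coth (√(a * b) * s) ^ 2) * hck + coth (√(a * b) * s) ^ 2 * hac

lemma riccatiSol_pos (ha : 0 < a) (hb : 0 < b) {s : ℝ} (hs : 0 < s) : 0 < riccatiSol a b s :=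
  mul_pos (sqrt_pos.2 (div_pos hb ha)) (coth_pos (mul_pos (sqrt_pos.2 (mul_pos ha hb)) hs))

lemma tendsto_riccatiSol_nhdsGT_zero (ha : 0 < a) (hb : 0 < b) :
    Tendsto (riccatiSol a b) (𝓝[>] 0) atTop := by
  have hk : 0 < √(a * b) := sqrt_pos.2 (mul_pos ha hb)
  have hscale : Tendsto (√(a * b) * ·) (𝓝[>] 0) (𝓝[>] 0) :=
    tendsto_nhdsWithin_of_tendsto_nhds_of_eventually_within _
      (by simpa using ((continuous_const_mul (√(a * b))).tendsto 0).mono_left nhdsWithin_le_nhds)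
      (eventually_nhdsWithin_of_forall fun _ hx => mul_pos hk hx)
  exact (tendsto_coth_nhdsGT_zero.comp hscale).const_mul_atTop (sqrt_pos.2 (div_pos hb ha))

lemma continuousAt_riccatiSol {s : ℝ} (ha : 0 < a) (hb : 0 < b) (hs : s ≠ 0) :
    ContinuousAt (riccatiSol a b) s :=
  (hasDerivAt_riccatiSol ha hb hs).continuousAt

end Riccati

theorem image_le_of_deriv_lt_deriv_boundary_of_tendsto_atTop {y y' B B' : ℝ → ℝ} {ε t : ℝ}
    (hεt : ε < t) (hy : ∀ x ∈ Ioc ε t, HasDerivAt y (y' x) x)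
    (hB : ∀ x ∈ Ioc ε t, HasDerivAt B (B' x) x) (hy_bdd : IsBoundedUnder (· ≤ ·) (𝓝[>] ε) y)
    (hB_top : Tendsto B (𝓝[>] ε) atTop) (hcontact : ∀ x ∈ Ioo ε t, y x = B x → y' x < B' x) :
    y t ≤ B t := by
  obtain ⟨M, hM⟩ := hy_bdd
  obtain ⟨s₀, ⟨hyM, hMB⟩, hs₀⟩ :=
    ((eventually_map.1 hM).and (hB_top.eventually_gt_atTop M) |>.and (Ioo_mem_nhdsGT hεt)).exists
  have hsub : Icc s₀ t ⊆ Ioc ε t := Icc_subset_Ioc_iff hs₀.2.le |>.2 ⟨hs₀.1, le_rfl⟩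
  refine image_le_of_deriv_right_lt_deriv_boundary'
    (fun x hx => (hy x (hsub hx)).continuousAt.continuousWithinAt)
    (fun x hx => (hy x (hsub (Ico_subset_Icc_self hx))).hasDerivWithinAt) (by linarith)
    (fun x hx => (hB x (hsub hx)).continuousAt.continuousWithinAt)
    (fun x hx => (hB x (hsub (Ico_subset_Icc_self hx))).hasDerivWithinAt)
    (fun x hx => hcontact x ⟨hs₀.1.trans_le hx.1, hx.2⟩) (right_mem_Icc.2 hs₀.2.le)

lemma le_riccatiSol_sub {a b ε t : ℝ} {y y' : ℝ → ℝ} (ha : 0 < a) (hb : 0 < b) (hεt : ε < t)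
    (hy : ∀ x ∈ Ioc ε t, HasDerivAt y (y' x) x) (hy_bdd : IsBoundedUnder (· ≤ ·) (𝓝[>] ε) y)
    (hineq : ∀ x ∈ Ioo ε t, 0 < y x → y' x ≤ -a * y x ^ 2 + b) :
    y t ≤ riccatiSol a b (t - ε) := by
  refine le_of_forall_pos_le_add fun δ hδ => ?_
  have hpole : Tendsto (· - ε) (𝓝[>] ε) (𝓝[>] 0) :=
    tendsto_nhdsWithin_of_tendsto_nhds_of_eventually_within _
      (by simpa using ((continuous_sub_right ε).tendsto ε).mono_left nhdsWithin_le_nhds)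
      (eventually_nhdsWithin_of_forall fun _ hx => mem_Ioi.2 (sub_pos.2 hx))
  refine image_le_of_deriv_lt_deriv_boundary_of_tendsto_atTop
    (B := fun x => riccatiSol a b (x - ε) + δ) (B' := fun x => b - a * riccatiSol a b (x - ε) ^ 2)
    hεt hy
    (fun x hx =>
      ((hasDerivAt_riccatiSol ha hb (sub_pos.2 hx.1).ne').comp_sub_const x ε).add_const δ)
    hy_bdd (tendsto_atTop_add_const_right _ δ ((tendsto_riccatiSol_nhdsGT_zero ha hb).comp hpole))
    fun x hx hyx => ?_
  have hsol := riccatiSol_pos ha hb (sub_pos.2 hx.1)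
  calc y' x ≤ -a * y x ^ 2 + b := hineq x hx (hyx ▸ by positivity)
    _ < b - a * riccatiSol a b (x - ε) ^ 2 := by rw [hyx]; nlinarith [mul_pos ha hδ]

theorem stmt_0_general (a b T : ℝ) (ha : 0 < a) (hb : 0 < b)
    (y y' : ℝ → ℝ)
    (hderiv : ∀ t ∈ Set.Ioo 0 T, HasDerivAt y (y' t) t)
    (hineq : ∀ t ∈ Set.Ioo 0 T, 0 < y t → y' t ≤ -a * (y t) ^ 2 + b) :
    ∀ t ∈ Set.Ioo 0 T, y t ≤ Real.sqrt (b / a) * Real.coth (Real.sqrt (a * b) * t) := by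
  rintro t ⟨ht, htT⟩
  have hshift : ∀ ε ∈ Ioo 0 t, y t ≤ riccatiSol a b (t - ε) := fun ε hε =>
    le_riccatiSol_sub ha hb hε.2
      (fun x hx => hderiv x ⟨hε.1.trans hx.1, hx.2.trans_lt htT⟩)
      ((hderiv ε ⟨hε.1, hε.2.trans htT⟩).continuousAt.continuousWithinAt.isBoundedUnder_le)
      fun x hx => hineq x ⟨hε.1.trans hx.1, hx.2.trans htT⟩
  have hlim : Tendsto (fun ε => riccatiSol a b (t - ε)) (𝓝[>] 0) (𝓝 (riccatiSol a b t)) := by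
    have hsub : Tendsto (t - ·) (𝓝[>] 0) (𝓝 t) := by
      simpa using ((continuous_sub_left t).tendsto 0).mono_left nhdsWithin_le_nhds
    exact (continuousAt_riccatiSol ha hb ht.ne').tendsto.comp hsub
  exact ge_of_tendsto hlim (eventually_of_mem (Ioo_mem_nhdsGT ht) hshift)

/-- ODE comparison lemma (Riccati-type differential inequality). -/
theorem stmt_0 (a b T : ℝ) (ha : 0 < a) (hb : 0 < b) (hT : 0 < T)
    (y y' : ℝ → ℝ)
    (hderiv : ∀ t ∈ Set.Ioo 0 T, HasDerivAt y (y' t) t)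
    (hcont : ContinuousOn y' (Set.Ioo 0 T))
    (hineq : ∀ t ∈ Set.Ioo 0 T, 0 < y t → y' t ≤ -a * (y t) ^ 2 + b) :
    ∀ t ∈ Set.Ioo 0 T, y t ≤ Real.sqrt (b / a) * Real.coth (Real.sqrt (a * b) * t) :=
  stmt_0_general a b T ha hb y y' hderiv hineq
end

section
/- For all real numbers a ≥ 0, b ≥ 0 and γ ∈ (0,1), the set S = {x ∈ [0,∞) : x ≤ a + b·x^γ} satisfies sup S ≤ a/(1-γ) + b^(1/(1-γ)). -/
/-! Weighted AM–GM with weights `1 - γ` and `γ`, applied to `B = b ^ (1 / (1 - γ))` and `x`, gives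
`b * x ^ γ = B ^ (1 - γ) * x ^ γ ≤ (1 - γ) * B + γ * x`; so every `x ≤ a + b * x ^ γ` satisfies
`(1 - γ) * x ≤ a + (1 - γ) * B`. -/

open Real

lemma mul_rpow_le_one_sub_mul_rpow_add_mul {b x γ : ℝ} (hb : 0 ≤ b) (hx : 0 ≤ x)
    (hγ0 : 0 ≤ γ) (hγ1 : γ < 1) :
    b * x ^ γ ≤ (1 - γ) * b ^ (1 / (1 - γ)) + γ * x := by
  have h1γ : 0 < 1 - γ := by linarith
  have hbB : (b ^ (1 / (1 - γ))) ^ (1 - γ) = b := by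
    rw [← rpow_mul hb, one_div, inv_mul_cancel₀ h1γ.ne', rpow_one]
  calc b * x ^ γ = (b ^ (1 / (1 - γ))) ^ (1 - γ) * x ^ γ := by rw [hbB]
    _ ≤ (1 - γ) * b ^ (1 / (1 - γ)) + γ * x :=
      geom_mean_le_arith_mean2_weighted h1γ.le hγ0 (rpow_nonneg hb _) hx (by ring)

lemma le_div_one_sub_add_rpow_of_le_add_mul_rpow {a b x γ : ℝ} (hb : 0 ≤ b) (hx : 0 ≤ x)
    (hγ0 : 0 ≤ γ) (hγ1 : γ < 1) (h : x ≤ a + b * x ^ γ) :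
    x ≤ a / (1 - γ) + b ^ (1 / (1 - γ)) := by
  have h1γ : 0 < 1 - γ := by linarith
  have hyoung := mul_rpow_le_one_sub_mul_rpow_add_mul hb hx hγ0 hγ1
  rw [div_add' _ _ _ h1γ.ne', le_div_iff₀ h1γ]
  linarith

/-- For a ≥ 0, b ≥ 0 and γ ∈ (0,1), sup {x ∈ [0,∞) : x ≤ a + b x^γ} ≤ a/(1-γ) + b^(1/(1-γ)). -/
theorem stmt_1 (a b γ : ℝ) (ha : 0 ≤ a) (hb : 0 ≤ b) (hγ : γ ∈ Set.Ioo (0:ℝ) 1) :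
    sSup {x : ℝ | 0 ≤ x ∧ x ≤ a + b * x ^ γ} ≤ a / (1 - γ) + b ^ (1 / (1 - γ)) := by
  obtain ⟨hγ0, hγ1⟩ := hγ
  have h1γ : 0 < 1 - γ := by linarith
  refine Real.sSup_le (fun x ⟨hx, hxle⟩ => ?_) (by positivity)
  exact le_div_one_sub_add_rpow_of_le_add_mul_rpow hb hx hγ0.le hγ1 hxle
end
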